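/- If n is a positive integer with z(n) − (r(n)+1)·m(n) < 0, then n ≤ 560; equivalently, x(n) > 0 for all n ≥ 561. -/

import Mathlib

/-!
By maximality of `z n`, `x n > 0` as soon as `3 ((r + 1) m + 1) < 2 n`. Since `m² ≤ 2 n`, this
follows from `9 (r + 1)² + 4 ≤ 2 n`. Minimality of `r` gives `2 n > 2 ^ r`, and `2 ^ r` outgrows
`9 (r + 1)²` from `r = 11` on; for `n ≥ 561` we have `r ≥ 10`, and `r = 10` is covered by
`2 n ≥ 1122 ≥ 9 · 11² + 4`.
-/

lemma nine_mul_succ_sq_add_two_le_two_pow {k : ℕ} (hk : 11 ≤ k) :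
    9 * (k + 1) ^ 2 + 2 ≤ 2 ^ k := by
  induction k, hk using Nat.le_induction with
  | base => norm_num
  | succ k _ ih => rw [pow_succ 2 k]; nlinarith

lemma two_pow_add_two_le_two_mul_of_minimal {n R : ℕ} (hn : 2 ≤ n)
    (hmin : ∀ s : ℕ, n ≤ 2 ^ s → R ≤ s) : 2 ^ R + 2 ≤ 2 * n := by
  obtain _ | k := R
  · omega
  · have : 2 ^ k < n := by
      by_contra! h
      exact absurd (hmin k h) (by omega)
    rw [pow_succ]
    omega

lemma mul_add_four_le_of_sq_le {a M N : ℕ} (ha : 3 ≤ a) (haN : a ^ 2 + 4 ≤ N)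
    (hM : M ^ 2 ≤ N) : a * M + 4 ≤ N := by
  rcases le_or_gt M a with h | h <;> nlinarith

lemma nine_mul_succ_sq_add_four_le {n R : ℕ} (hn : 561 ≤ n) (hle : n ≤ 2 ^ R)
    (hmin : ∀ s : ℕ, n ≤ 2 ^ s → R ≤ s) : 9 * (R + 1) ^ 2 + 4 ≤ 2 * n := by
  have hR : 10 ≤ R := by
    by_contra! h
    have : 2 ^ R ≤ 2 ^ 9 := Nat.pow_le_pow_right (by norm_num) (by omega)
    omega
  rcases hR.eq_or_lt with rfl | hR
  · omega
  · have := nine_mul_succ_sq_add_two_le_two_pow hR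
    have := two_pow_add_two_le_two_mul_of_minimal (by omega) hmin
    omega

theorem stmt_general
    (z : ℕ → ℤ) (m r : ℕ → ℕ) (x : ℕ → ℤ)
    (hz : ∀ n : ℕ, 1 ≤ n → 3 * z n < 2 * (n : ℤ) ∧ ∀ w : ℤ, 3 * w < 2 * (n : ℤ) → w ≤ z n)
    (hm : ∀ n : ℕ, 1 ≤ n → (m n : ℤ) ^ 2 ≤ 2 * (n : ℤ) ∧ ∀ w : ℕ, (w : ℤ) ^ 2 ≤ 2 * (n : ℤ) → w ≤ m n)
    (hr : ∀ n : ℕ, 1 ≤ n → n ≤ 2 ^ r n ∧ ∀ s : ℕ, n ≤ 2 ^ s → r n ≤ s)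
    (hx : ∀ n : ℕ, x n = z n - ((r n : ℤ) + 1) * (m n : ℤ)) :
    (∀ n : ℕ, 1 ≤ n → x n < 0 → n ≤ 560) ∧ (∀ n : ℕ, 561 ≤ n → x n > 0) := by
  have hpos : ∀ n : ℕ, 561 ≤ n → x n > 0 := by
    intro n hn
    have h1 : 1 ≤ n := by omega
    obtain ⟨hle, hmin⟩ := hr n h1
    have hsq : m n ^ 2 ≤ 2 * n := by exact_mod_cast (hm n h1).1
    have hkey : 3 * (r n + 1) * m n + 4 ≤ 2 * n :=
      mul_add_four_le_of_sq_le (by omega) (by nlinarith [nine_mul_succ_sq_add_four_le hn hle hmin])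
        hsq
    have hkeyℤ : 3 * ((r n : ℤ) + 1) * m n + 4 ≤ 2 * n := by exact_mod_cast hkey
    have hzn : ((r n : ℤ) + 1) * m n + 1 ≤ z n := (hz n h1).2 _ (by linarith)
    rw [hx n]
    linarith
  refine ⟨fun n _ hneg => ?_, hpos⟩
  by_contra! h
  exact absurd (hpos n h) (by omega)

theorem stmt
    (z : ℕ → ℤ) (m r : ℕ → ℕ) (c x : ℕ → ℤ) (y : ℕ → ℚ)
    (hz : ∀ n : ℕ, 1 ≤ n → 3 * z n < 2 * (n : ℤ) ∧ ∀ w : ℤ, 3 * w < 2 * (n : ℤ) → w ≤ z n)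
    (hm : ∀ n : ℕ, 1 ≤ n → (m n : ℤ) ^ 2 ≤ 2 * (n : ℤ) ∧ ∀ w : ℕ, (w : ℤ) ^ 2 ≤ 2 * (n : ℤ) → w ≤ m n)
    (hr : ∀ n : ℕ, 1 ≤ n → n ≤ 2 ^ r n ∧ ∀ s : ℕ, n ≤ 2 ^ s → r n ≤ s)
    (hc : ∀ n : ℕ, c n = 2 * (n : ℤ) - 2 * z n + 2)
    (hx : ∀ n : ℕ, x n = z n - ((r n : ℤ) + 1) * (m n : ℤ))
    (hy : ∀ n : ℕ, y n = (2 : ℚ) ^ (c n - (m n : ℤ)) - (n : ℚ) ^ ((m n : ℤ) - 1)) :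
    (∀ n : ℕ, 1 ≤ n → x n < 0 → n ≤ 560) ∧ (∀ n : ℕ, 561 ≤ n → x n > 0) :=
  stmt_general z m r x hz hm hr hx
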